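/- arXiv:1907.01359 — 7 statements merged into one kernel-verified Lean document; each statement's English description precedes it below -/
import Mathlib

section
/- Let a : ℕ → ℤ be an infinite weight sequence whose partial sums are bounded below by -c₀, and suppose limsup_{k→∞} (1/k)·∑_{i<k} a(i) > 0. If additionally the sequence is generated by walking on a finite directed graph with integer-weighted (2-dimensional) edges, then there exists a cycle C in the graph, reachable from the start vertex, with first-coordinate weight w₁(C) ≥ 0 and second-coordinate weight w₂(C) > 0. -/
/-!
Write `A k` and `B k` for the two energy levels after `k` steps of the play. If there were no good
cycle, then no two positions `i < j` at the same vertex could have `A i ≤ A j` and `B i < B j`,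
since the segment of the play between them would be one. Consequently, among the positions where
`B` reaches a new strict maximum, `A` strictly decreases along those at any fixed vertex; as `A` is
bounded below and there are finitely many vertices, there are only finitely many such positions,
so `B` is bounded above. Then `B k / k` has nonpositive limsup, contradicting the hypothesis.
-/

open Filter Finset Function Relation Topology

def records {β : Type*} [LT β] (B : ℕ → β) : Set ℕ := {k | ∀ i < k, B i < B k}

theorem Set.Finite.of_strictAntiOn_of_bddBelow {β : Type*} [Preorder β] [LocallyFiniteOrder β]
    {s : Set ℕ} {f : ℕ → β} (hf : StrictAntiOn f s) (hb : BddBelow (f '' s)) : s.Finite := by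
  rcases s.eq_empty_or_nonempty with rfl | hs
  · exact Set.finite_empty
  obtain ⟨b, hb⟩ := hb
  have hmin : sInf s ∈ s := Nat.sInf_mem hs
  refine Set.Finite.of_finite_image ((Set.finite_Icc b (f (sInf s))).subset ?_) hf.injOn
  rintro _ ⟨k, hk, rfl⟩
  exact ⟨hb ⟨k, hk, rfl⟩, hf.antitoneOn hmin hk (Nat.sInf_le hk)⟩

theorem bddAbove_range_of_finite_records {β : Type*} [LinearOrder β] {B : ℕ → β}
    (hB : (records B).Finite) : BddAbove (Set.range B) := by
  obtain ⟨N, hN⟩ := hB.bddAbove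
  have : Nonempty β := ⟨B 0⟩
  obtain ⟨M, hM⟩ := ((Set.finite_Iic N).image B).bddAbove
  refine ⟨M, Set.forall_mem_range.2 fun k => ?_⟩
  induction k using Nat.strong_induction_on with
  | _ k ih =>
    by_contra hk
    have hrec : k ∈ records B := fun i hi => (ih i hi).trans_lt (not_le.1 hk)
    exact hk (hM ⟨k, hN hrec, rfl⟩)

theorem exists_eq_le_lt_of_not_bddAbove {V α β : Type*} [Finite V] [LinearOrder α]
    [LocallyFiniteOrder α] [LinearOrder β] (ρ : ℕ → V) {A : ℕ → α} {B : ℕ → β}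
    (hA : BddBelow (Set.range A)) (hB : ¬BddAbove (Set.range B)) :
    ∃ i j, i < j ∧ ρ i = ρ j ∧ A i ≤ A j ∧ B i < B j := by
  by_contra! h
  have hfiber : ∀ v, (records B ∩ ρ ⁻¹' {v}).Finite := fun v =>
    Set.Finite.of_strictAntiOn_of_bddBelow
      (fun i hi j hj hij => not_le.1 fun hle =>
        (h i j hij (hi.2.trans hj.2.symm) hle).not_gt (hj.1 i hij))
      (hA.mono (Set.image_subset_range A _))
  exact hB (bddAbove_range_of_finite_records ((Set.finite_iUnion hfiber).subset
    fun k hk => Set.mem_iUnion.2 ⟨ρ k, hk, rfl⟩))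

theorem limsup_div_natCast_nonpos {f : ℕ → ℝ} {M : ℝ} (hf : ∀ k, f k ≤ M) :
    limsup (fun k : ℕ => f k / k) atTop ≤ 0 := by
  by_cases hcob : IsCoboundedUnder (· ≤ ·) atTop (fun k : ℕ => f k / k)
  · have hlim : Tendsto (fun k : ℕ => M / k) atTop (𝓝 0) :=
      tendsto_const_div_atTop_nhds_zero_nat M
    refine le_of_forall_pos_le_add fun ε hε => limsup_le_of_le hcob ?_
    filter_upwards [hlim.eventually_lt_const hε] with k hk
    calc f k / k ≤ M / k := div_le_div_of_nonneg_right (hf k) k.cast_nonneg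
      _ ≤ 0 + ε := by linarith
  · -- Otherwise the limsup is `sInf` of a set not bounded below: the junk value `0`.
    exact (Real.sInf_of_not_bddBelow fun ⟨b, hb⟩ => hcob ⟨b, fun a ha => hb ha⟩).le

theorem sum_range_shift_eq_sub {M : Type*} [AddCommGroup M] (g : ℕ → M) {i j : ℕ}
    (hij : i ≤ j) :
    ∑ m ∈ range (j - i), g (i + m) = ∑ m ∈ range j, g m - ∑ m ∈ range i, g m := by
  rw [← sum_Ico_eq_sum_range, sum_Ico_eq_sub _ hij]

theorem exists_good_cycle_of_play_general {V : Type*} [Fintype V]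
    (E : V → V → Prop)
    (w₁ w₂ : V → V → ℤ) (v₀ : V)
    (ρ : ℕ → V) (hρ0 : ρ 0 = v₀) (hρ : ∀ k : ℕ, E (ρ k) (ρ (k + 1)))
    (c₀ : ℕ)
    (hen : ∀ k : ℕ, 0 ≤ (c₀ : ℤ) + ∑ i ∈ Finset.range k, w₁ (ρ i) (ρ (i + 1)))
    (hmp : 0 < Filter.atTop.limsup
        (fun k : ℕ => ((∑ i ∈ Finset.range k, w₂ (ρ i) (ρ (i + 1)) : ℤ) : ℝ) / k)) :
    ∃ (n : ℕ) (c : ℕ → V), 1 ≤ n ∧ c n = c 0 ∧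
      (∀ i < n, E (c i) (c (i + 1))) ∧
      Relation.ReflTransGen E v₀ (c 0) ∧
      0 ≤ ∑ i ∈ Finset.range n, w₁ (c i) (c (i + 1)) ∧
      0 < ∑ i ∈ Finset.range n, w₂ (c i) (c (i + 1)) := by
  set A : ℕ → ℤ := fun k => ∑ i ∈ range k, w₁ (ρ i) (ρ (i + 1))
  set B : ℕ → ℤ := fun k => ∑ i ∈ range k, w₂ (ρ i) (ρ (i + 1))
  have hA : BddBelow (Set.range A) :=
    ⟨-c₀, Set.forall_mem_range.2 fun k => by linarith [hen k]⟩
  have hB : ¬BddAbove (Set.range B) := fun ⟨M, hM⟩ =>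
    hmp.not_ge (limsup_div_natCast_nonpos (M := M) fun k => by exact_mod_cast hM ⟨k, rfl⟩)
  obtain ⟨i, j, hij, hρij, hAij, hBij⟩ := exists_eq_le_lt_of_not_bddAbove ρ hA hB
  refine ⟨j - i, fun m => ρ (i + m), by omega, by simp [Nat.add_sub_cancel' hij.le, hρij],
    fun m _ => hρ (i + m), ?_, ?_, ?_⟩
  · rw [← hρ0]
    exact (reflTransGen_of_succ_of_le (E on ρ) (fun k _ => hρ k) i.zero_le).lift ρ fun _ _ h => h
  · exact (sub_nonneg.2 hAij).trans_eq (sum_range_shift_eq_sub _ hij.le).symm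
  · exact (sub_pos.2 hBij).trans_eq (sum_range_shift_eq_sub _ hij.le).symm

/-- If a play `ρ` from `v₀` in a finite 2-dimensionally weighted directed graph has
its first-coordinate energy levels bounded below (by `-c₀`) and a strictly positive
mean-payoff-sup on the second coordinate, then there is a cycle reachable from `v₀`
with nonnegative first-coordinate weight and strictly positive second-coordinate
weight (a good cycle). -/
theorem exists_good_cycle_of_play {V : Type*} [Fintype V]
    (E : V → V → Prop) (hout : ∀ v : V, ∃ v' : V, E v v')
    (w₁ w₂ : V → V → ℤ) (v₀ : V)
    (ρ : ℕ → V) (hρ0 : ρ 0 = v₀) (hρ : ∀ k : ℕ, E (ρ k) (ρ (k + 1)))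
    (c₀ : ℕ)
    (hen : ∀ k : ℕ, 0 ≤ (c₀ : ℤ) + ∑ i ∈ Finset.range k, w₁ (ρ i) (ρ (i + 1)))
    (hmp : 0 < Filter.atTop.limsup
        (fun k : ℕ => ((∑ i ∈ Finset.range k, w₂ (ρ i) (ρ (i + 1)) : ℤ) : ℝ) / k)) :
    ∃ (n : ℕ) (c : ℕ → V), 1 ≤ n ∧ c n = c 0 ∧
      (∀ i < n, E (c i) (c (i + 1))) ∧
      Relation.ReflTransGen E v₀ (c 0) ∧
      0 ≤ ∑ i ∈ Finset.range n, w₁ (c i) (c (i + 1)) ∧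
      0 < ∑ i ∈ Finset.range n, w₂ (c i) (c (i + 1)) :=
  exists_good_cycle_of_play_general E w₁ w₂ v₀ ρ hρ0 hρ c₀ hen hmp
end

section
/- In a finite 2-dimensional weighted directed graph, there exists a reachable cycle C with w₁(C) ≥ 0 and w₂(C) > 0 if and only if either (1) there exists a reachable simple cycle with this property, or (2) there exist two simple cycles C, C' lying in the same strongly connected component reachable from the start vertex such that w(C) = (-x, y) and w(C') = (x', -y') with x, x', y positive integers and y' ∈ ℕ, and x'·y - x·y' > 0. -/
/-!
Cutting a closed walk at a repeated vertex splits it into two shorter closed walks, so its weight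
is a sum of weights of simple cycles, all in the strongly connected component of its start.
Suppose this sum lies in the quadrant `{v | 0 ≤ v.1 ∧ 0 < v.2}` but no summand does. Among the
summands `p = (-x, y)` with `x, y > 0` take the steepest one; if no summand `q = (x', -y')` with
`x' > 0`, `y' ≥ 0` had `x' y - x y' > 0`, every summand would lie in the half-plane
`y v.1 + x v.2 ≤ 0`, and so would the sum. Conversely, given such `C` and `C'`, the closed walk
`Cᵃ P C'ᵇ Q`, where `P` and `Q` connect the two cycles, is good for suitable `a ≥ 1` and `b`:
as `x' y - x y' > 0`, the combinations `a (-x, y) + b (x', -y')` reach arbitrarily deep into the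
quadrant, so the pumped cycles outweigh the fixed detour `P Q`.
-/

open Finset

lemma exists_supporting_direction (S : Multiset (ℤ × ℤ))
    (hquad : ∀ v ∈ S, 0 ≤ v.1 → v.2 ≤ 0)
    (hcross : ∀ p ∈ S, ∀ q ∈ S, p.1 < 0 → 0 < p.2 → 0 < q.1 → q.2 ≤ 0 →
      q.1 * p.2 - p.1 * q.2 ≤ 0) :
    ∃ p : ℤ × ℤ, p.1 < 0 ∧ 0 ≤ p.2 ∧ ∀ v ∈ S, p.2 * v.1 - p.1 * v.2 ≤ 0 := by
  have hneg : ∀ v ∈ S, 0 < v.2 → v.1 < 0 := fun v hv hv₂ => by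
    by_contra! hv₁
    exact (hquad v hv hv₁).not_gt hv₂
  by_cases hT : S.filter (fun p => p.1 < 0 ∧ 0 < p.2) = 0
  · refine ⟨(-1, 0), neg_one_lt_zero, le_rfl, fun v hv => ?_⟩
    by_contra! hv₂
    have : v ∈ S.filter (fun p => p.1 < 0 ∧ 0 < p.2) :=
      Multiset.mem_filter.mpr ⟨hv, hneg v hv (by simpa using hv₂), by simpa using hv₂⟩
    simp [hT] at this
  -- the summand of steepest slope in the open second quadrant
  obtain ⟨p, hpT, hmax⟩ := Multiset.exists_max_image (fun p : ℤ × ℤ => (p.2 : ℚ) / -p.1) hT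
  obtain ⟨hp, hp₁, hp₂⟩ := Multiset.mem_filter.mp hpT
  refine ⟨p, hp₁, hp₂.le, fun v hv => ?_⟩
  by_cases hv₂ : 0 < v.2
  · have hv₁ := hneg v hv hv₂
    have hslope := hmax v (Multiset.mem_filter.mpr ⟨hv, hv₁, hv₂⟩)
    rw [div_le_div_iff₀ (by simpa using hv₁) (by simpa using hp₁)] at hslope
    have : v.2 * -p.1 ≤ p.2 * -v.1 := by exact_mod_cast hslope
    linarith
  · by_cases hv₁ : 0 < v.1
    · linarith [hcross p hp v hv hp₁ hp₂ hv₁ (not_lt.mp hv₂)]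
    · nlinarith

theorem exists_mem_quadrant_or_pos_cross (S : Multiset (ℤ × ℤ)) (h₁ : 0 ≤ S.sum.1)
    (h₂ : 0 < S.sum.2) :
    (∃ p ∈ S, 0 ≤ p.1 ∧ 0 < p.2) ∨
      ∃ p ∈ S, ∃ q ∈ S, p.1 < 0 ∧ 0 < p.2 ∧ 0 < q.1 ∧ q.2 ≤ 0 ∧ 0 < q.1 * p.2 - p.1 * q.2 := by
  by_contra! h
  obtain ⟨p, hp₁, hp₂, hS⟩ := exists_supporting_direction S h.1 h.2
  have hsum : p.2 * S.sum.1 - p.1 * S.sum.2 ≤ 0 := by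
    rw [Multiset.fst_sum, Multiset.snd_sum, ← Multiset.sum_map_mul_left,
      ← Multiset.sum_map_mul_left, ← Multiset.sum_map_sub]
    simpa using Multiset.sum_map_le_sum_map _ (fun _ => (0 : ℤ)) hS
  nlinarith

lemma exists_nsmul_add_nsmul_add_mem_quadrant {p q : ℤ × ℤ} (hp : p.1 < 0) (hq : 0 < q.1)
    (hpq : 0 < q.1 * p.2 - p.1 * q.2) (d : ℤ × ℤ) :
    ∃ a b : ℕ, 1 ≤ a ∧ 0 ≤ (a • p + b • q + d).1 ∧ 0 < (a • p + b • q + d).2 := by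
  set s := 1 + |d.1|
  set t := 1 + s * |q.2| + |d.2|
  have hs : 0 ≤ s := by have := abs_nonneg d.1; omega
  have ht : 1 ≤ t := by have := abs_nonneg d.2; have := mul_nonneg hs (abs_nonneg q.2); omega
  have hq₁ : 1 ≤ q.1 := hq
  have hpq₁ : 1 ≤ q.1 * p.2 - p.1 * q.2 := hpq
  have hat : 1 ≤ q.1 * t := by nlinarith
  -- With `a = q.1 t` and `b = -p.1 t + s`, the first coordinate of `a • p + b • q` is `s q.1`
  -- and the second is `t (q.1 p.2 - p.1 q.2) + s q.2`.
  obtain ⟨a, ha⟩ := Int.eq_ofNat_of_zero_le (a := q.1 * t) (by omega)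
  obtain ⟨b, hb⟩ := Int.eq_ofNat_of_zero_le (a := -p.1 * t + s) (by nlinarith)
  refine ⟨a, b, by omega, ?_, ?_⟩
  · rw [Prod.fst_add, Prod.fst_add, Prod.smul_fst, Prod.smul_fst, nsmul_eq_mul, nsmul_eq_mul,
      ← ha, ← hb]
    nlinarith [neg_abs_le d.1, mul_le_mul_of_nonneg_left hq₁ hs]
  · rw [Prod.snd_add, Prod.snd_add, Prod.smul_snd, Prod.smul_snd, nsmul_eq_mul, nsmul_eq_mul,
      ← ha, ← hb]
    nlinarith [neg_abs_le d.2, mul_le_mul_of_nonneg_left (neg_abs_le q.2) hs,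
      mul_le_mul_of_nonneg_left hpq₁ (zero_le_one.trans ht)]

section Walks

variable {V M : Type*} [AddCommMonoid M] (E : V → V → Prop) (w : V → V → M)

def IsWalk (n : ℕ) (c : ℕ → V) : Prop := ∀ i < n, E (c i) (c (i + 1))

def walkWeight (n : ℕ) (c : ℕ → V) : M := ∑ i ∈ range n, w (c i) (c (i + 1))

def HasWalk (u v : V) (n : ℕ) (m : M) : Prop :=
  ∃ c : ℕ → V, c 0 = u ∧ c n = v ∧ IsWalk E n c ∧ walkWeight w n c = m

def IsSimpleCycleWeightInSCC (r : V) (m : M) : Prop :=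
  ∃ (n : ℕ) (c : ℕ → V), 1 ≤ n ∧ c n = c 0 ∧ IsWalk E n c ∧ Set.InjOn c (Set.Iio n) ∧
    Relation.ReflTransGen E r (c 0) ∧ Relation.ReflTransGen E (c 0) r ∧ walkWeight w n c = m

variable {E w}

lemma walkWeight_prodMk {N : Type*} [AddCommMonoid N] (w₁ : V → V → M) (w₂ : V → V → N)
    (n : ℕ) (c : ℕ → V) :
    walkWeight (fun u v => (w₁ u v, w₂ u v)) n c = (walkWeight w₁ n c, walkWeight w₂ n c) :=
  Prod.ext Prod.fst_sum Prod.snd_sum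

lemma IsWalk.reflTransGen {n : ℕ} {c : ℕ → V} (hc : IsWalk E n c) :
    Relation.ReflTransGen E (c 0) (c n) := by
  induction n with
  | zero => exact .refl
  | succ n ih => exact (ih fun i hi => hc i (by omega)).tail (hc n n.lt_succ_self)

lemma IsWalk.hasWalk_Ico {n : ℕ} {c : ℕ → V} (hc : IsWalk E n c) {i j : ℕ} (hij : i ≤ j)
    (hjn : j ≤ n) :
    HasWalk E w (c i) (c j) (j - i) (∑ k ∈ Ico i j, w (c k) (c (k + 1))) :=
  ⟨fun t => c (i + t), rfl, congrArg c (Nat.add_sub_cancel' hij),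
    fun t ht => hc (i + t) (by omega),
    (sum_Ico_eq_sum_range (fun k => w (c k) (c (k + 1))) i j).symm⟩

lemma HasWalk.reflTransGen {u v : V} {n : ℕ} {m : M} (h : HasWalk E w u v n m) :
    Relation.ReflTransGen E u v := by
  obtain ⟨c, rfl, rfl, hc, -⟩ := h
  exact hc.reflTransGen

lemma HasWalk.refl (u : V) : HasWalk E w u u 0 0 :=
  ⟨fun _ => u, rfl, rfl, fun _ hi => absurd hi (Nat.not_lt_zero _), sum_range_zero _⟩

lemma HasWalk.single {u v : V} (h : E u v) : HasWalk E w u v 1 (w u v) :=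
  ⟨fun i => if i = 0 then u else v, rfl, rfl, fun i hi => by simpa [Nat.lt_one_iff.mp hi] using h,
    by simp [walkWeight]⟩

def walkAppend (n : ℕ) (c d : ℕ → V) (i : ℕ) : V := if i ≤ n then c i else d (i - n)

lemma walkAppend_of_le {n i : ℕ} {c d : ℕ → V} (hi : i ≤ n) : walkAppend n c d i = c i :=
  if_pos hi

lemma walkAppend_add {n : ℕ} {c d : ℕ → V} (hd : d 0 = c n) (k : ℕ) :
    walkAppend n c d (n + k) = d k := by
  rcases k with _ | k
  · exact (walkAppend_of_le le_rfl).trans hd.symm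
  · exact (if_neg (by omega)).trans (congrArg d (by omega))

lemma HasWalk.append {u v x : V} {n n' : ℕ} {m m' : M} (h : HasWalk E w u v n m)
    (h' : HasWalk E w v x n' m') : HasWalk E w u x (n + n') (m + m') := by
  obtain ⟨c, rfl, rfl, hc, rfl⟩ := h
  obtain ⟨d, hd, rfl, hd', rfl⟩ := h'
  refine ⟨walkAppend n c d, walkAppend_of_le n.zero_le, walkAppend_add hd n', ?_, ?_⟩
  · intro i hi
    rcases lt_or_ge i n with hin | hin
    · rw [walkAppend_of_le hin.le, walkAppend_of_le hin]
      exact hc i hin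
    · obtain ⟨k, rfl⟩ := Nat.exists_eq_add_of_le hin
      rw [walkAppend_add hd, add_assoc, walkAppend_add hd]
      exact hd' k (by omega)
  · unfold walkWeight
    rw [sum_range_add]
    congr 1
    · refine sum_congr rfl fun i hi => ?_
      have hin := mem_range.mp hi
      rw [walkAppend_of_le hin.le, walkAppend_of_le hin]
    · refine sum_congr rfl fun k _ => ?_
      rw [walkAppend_add hd, add_assoc, walkAppend_add hd]

lemma HasWalk.nsmul {u : V} {n : ℕ} {m : M} (h : HasWalk E w u u n m) (k : ℕ) :
    HasWalk E w u u (k * n) (k • m) := by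
  induction k with
  | zero => simpa using HasWalk.refl u
  | succ k ih => simpa [Nat.succ_mul, succ_nsmul] using ih.append h

lemma reflTransGen_iff_exists_hasWalk {u v : V} :
    Relation.ReflTransGen E u v ↔ ∃ (n : ℕ) (m : M), HasWalk E w u v n m := by
  refine ⟨fun h => ?_, fun ⟨_, _, h⟩ => h.reflTransGen⟩
  induction h with
  | refl => exact ⟨0, 0, HasWalk.refl u⟩
  | tail _ e ih =>
    obtain ⟨n, m, h⟩ := ih
    exact ⟨_, _, h.append (HasWalk.single e)⟩

theorem exists_multiset_isSimpleCycleWeightInSCC_sum_eq {r u : V} {n : ℕ} {m : M}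
    (h : HasWalk E w u u n m) (hn : 1 ≤ n) (hru : Relation.ReflTransGen E r u)
    (hur : Relation.ReflTransGen E u r) :
    ∃ S : Multiset M, (∀ x ∈ S, IsSimpleCycleWeightInSCC E w r x) ∧ S.sum = m := by
  induction n using Nat.strong_induction_on generalizing u m with
  | _ n ih =>
  obtain ⟨c, rfl, hcn, hc, rfl⟩ := h
  by_cases hinj : Set.InjOn c (Set.Iio n)
  · refine ⟨{walkWeight w n c}, ?_, Multiset.sum_singleton _⟩
    simpa using ⟨n, c, hn, hcn, hc, hinj, hru, hur, rfl⟩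
  obtain ⟨i, j, hij, hjn, hcij⟩ : ∃ i j, i < j ∧ j < n ∧ c i = c j := by
    simp only [Set.InjOn, Set.mem_Iio, not_forall] at hinj
    obtain ⟨a, ha, b, hb, hab, hne⟩ := hinj
    rcases lt_or_gt_of_ne hne with h | h
    exacts [⟨a, b, h, hb, hab⟩, ⟨b, a, h, ha, hab.symm⟩]
  have hpre := hc.hasWalk_Ico (w := w) (Nat.zero_le i) (hij.trans hjn).le
  have hloop := hc.hasWalk_Ico (w := w) hij.le hjn.le
  have hsuf := hc.hasWalk_Ico (w := w) hjn.le le_rfl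
  rw [← hcij] at hloop hsuf
  rw [hcn] at hsuf
  obtain ⟨S₁, hS₁, hsum₁⟩ := ih _ (by omega) hloop (by omega) (hru.trans hpre.reflTransGen)
    (hsuf.reflTransGen.trans hur)
  obtain ⟨S₂, hS₂, hsum₂⟩ := ih _ (by omega) (hpre.append hsuf) (by omega) hru hur
  refine ⟨S₁ + S₂, fun x hx => (Multiset.mem_add.mp hx).elim (hS₁ x) (hS₂ x), ?_⟩
  rw [Multiset.sum_add, hsum₁, hsum₂, walkWeight, range_eq_Ico,
    ← sum_Ico_consecutive _ (Nat.zero_le i) (hij.trans hjn).le,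
    ← sum_Ico_consecutive _ hij.le hjn.le]
  abel

lemma exists_hasWalk_mem_quadrant_of_pos_cross {W : V → V → ℤ × ℤ} {u u' : V} {n n' : ℕ}
    {p q : ℤ × ℤ} (hC : HasWalk E W u u n p) (hC' : HasWalk E W u' u' n' q) (hn : 1 ≤ n)
    (huu' : Relation.ReflTransGen E u u') (hu'u : Relation.ReflTransGen E u' u) (hp : p.1 < 0)
    (hq : 0 < q.1) (hpq : 0 < q.1 * p.2 - p.1 * q.2) :
    ∃ (N : ℕ) (m : ℤ × ℤ), 1 ≤ N ∧ HasWalk E W u u N m ∧ 0 ≤ m.1 ∧ 0 < m.2 := by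
  obtain ⟨k, P, hP⟩ := (reflTransGen_iff_exists_hasWalk (w := W)).mp huu'
  obtain ⟨l, Q, hQ⟩ := (reflTransGen_iff_exists_hasWalk (w := W)).mp hu'u
  obtain ⟨a, b, ha, h₁, h₂⟩ := exists_nsmul_add_nsmul_add_mem_quadrant hp hq hpq (P + Q)
  have hweight : a • p + (P + (b • q + Q)) = a • p + b • q + (P + Q) := by abel
  refine ⟨_, _, ?_, (hC.nsmul a).append (hP.append ((hC'.nsmul b).append hQ)), ?_⟩
  · have := Nat.mul_le_mul ha hn
    omega
  · rw [hweight]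
    exact ⟨h₁, h₂⟩

end Walks

theorem good_cycle_characterization_general {V : Type*}
    (E : V → V → Prop) (w₁ w₂ : V → V → ℤ) (v₀ : V) :
    (∃ (n : ℕ) (c : ℕ → V), 1 ≤ n ∧ c n = c 0 ∧
        (∀ i < n, E (c i) (c (i + 1))) ∧
        Relation.ReflTransGen E v₀ (c 0) ∧
        0 ≤ ∑ i ∈ Finset.range n, w₁ (c i) (c (i + 1)) ∧
        0 < ∑ i ∈ Finset.range n, w₂ (c i) (c (i + 1)))
    ↔
    ((∃ (n : ℕ) (c : ℕ → V), 1 ≤ n ∧ c n = c 0 ∧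
        (∀ i < n, E (c i) (c (i + 1))) ∧
        (∀ i < n, ∀ j < n, c i = c j → i = j) ∧
        Relation.ReflTransGen E v₀ (c 0) ∧
        0 ≤ ∑ i ∈ Finset.range n, w₁ (c i) (c (i + 1)) ∧
        0 < ∑ i ∈ Finset.range n, w₂ (c i) (c (i + 1)))
      ∨
      (∃ (n n' : ℕ) (c c' : ℕ → V) (x x' y y' : ℤ),
        1 ≤ n ∧ c n = c 0 ∧ (∀ i < n, E (c i) (c (i + 1))) ∧
        (∀ i < n, ∀ j < n, c i = c j → i = j) ∧
        1 ≤ n' ∧ c' n' = c' 0 ∧ (∀ i < n', E (c' i) (c' (i + 1))) ∧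
        (∀ i < n', ∀ j < n', c' i = c' j → i = j) ∧
        Relation.ReflTransGen E v₀ (c 0) ∧
        Relation.ReflTransGen E (c 0) (c' 0) ∧
        Relation.ReflTransGen E (c' 0) (c 0) ∧
        1 ≤ x ∧ 1 ≤ x' ∧ 1 ≤ y ∧ 0 ≤ y' ∧
        (∑ i ∈ Finset.range n, w₁ (c i) (c (i + 1))) = -x ∧
        (∑ i ∈ Finset.range n, w₂ (c i) (c (i + 1))) = y ∧
        (∑ i ∈ Finset.range n', w₁ (c' i) (c' (i + 1))) = x' ∧
        (∑ i ∈ Finset.range n', w₂ (c' i) (c' (i + 1))) = -y' ∧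
        0 < x' * y - x * y')) := by
  set W : V → V → ℤ × ℤ := fun u v => (w₁ u v, w₂ u v)
  have hW (n : ℕ) (c : ℕ → V) : walkWeight W n c = (walkWeight w₁ n c, walkWeight w₂ n c) :=
    walkWeight_prodMk w₁ w₂ n c
  constructor
  · rintro ⟨n, c, hn, hcn, hc, hv₀, h₁, h₂⟩
    obtain ⟨S, hS, hsum⟩ := exists_multiset_isSimpleCycleWeightInSCC_sum_eq
      (⟨c, rfl, hcn, hc, rfl⟩ : HasWalk E W (c 0) (c 0) n _) hn .refl .refl
    rw [hW] at hsum
    rcases exists_mem_quadrant_or_pos_cross S (hsum ▸ h₁) (hsum ▸ h₂) with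
      ⟨p, hp, hp₁, hp₂⟩ | ⟨p, hp, q, hq, hp₁, hp₂, hq₁, hq₂, hpq⟩
    · obtain ⟨n, c, hn, hcn, hc, hinj, hr, -, rfl⟩ := hS p hp
      rw [hW] at hp₁ hp₂
      exact .inl ⟨n, c, hn, hcn, hc, hinj, hv₀.trans hr, hp₁, hp₂⟩
    · obtain ⟨n, c, hn, hcn, hc, hinj, hr, hr', rfl⟩ := hS p hp
      obtain ⟨n', c', hn', hcn', hc', hinj', hs, hs', rfl⟩ := hS q hq
      rw [hW, hW] at hpq
      rw [hW] at hp₁ hp₂ hq₁ hq₂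
      refine .inr ⟨n, n', c, c', -walkWeight w₁ n c, walkWeight w₁ n' c', walkWeight w₂ n c,
        -walkWeight w₂ n' c', hn, hcn, hc, hinj, hn', hcn', hc', hinj', hv₀.trans hr,
        hr'.trans hs, hs'.trans hr, by omega, hq₁, hp₂, by omega, (neg_neg _).symm, rfl, rfl,
        (neg_neg _).symm, by rwa [neg_mul_neg]⟩
  · rintro (⟨n, c, hn, hcn, hc, -, hv₀, h₁, h₂⟩ | ⟨n, n', c, c', x, x', y, y', hn, hcn, hc, -,
      -, hcn', hc', -, hv₀, hr, hr', hx, hx', -, -, h₁, h₂, h₁', h₂', hxy⟩)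
    · exact ⟨n, c, hn, hcn, hc, hv₀, h₁, h₂⟩
    · obtain ⟨N, m, hN, ⟨d, hd₀, hdN, hd, rfl⟩, hm₁, hm₂⟩ :=
        exists_hasWalk_mem_quadrant_of_pos_cross (p := (-x, y)) (q := (x', -y'))
          ⟨c, rfl, hcn, hc, (hW n c).trans (Prod.ext h₁ h₂)⟩
          ⟨c', rfl, hcn', hc', (hW n' c').trans (Prod.ext h₁' h₂')⟩ hn hr hr'
          (neg_neg_of_pos hx) hx' (by simpa using hxy)
      rw [hW] at hm₁ hm₂
      exact ⟨N, d, hN, hdN.trans hd₀.symm, hd, hd₀ ▸ hv₀, hm₁, hm₂⟩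

/-- Characterization of the existence of a reachable good cycle: a finite
2-dimensionally weighted directed graph has a cycle reachable from `v₀` with
`w₁ ≥ 0` and `w₂ > 0` iff either (1) there is such a cycle that is simple, or
(2) there are two simple cycles `C, C'` in one strongly connected component
reachable from `v₀` with `w(C) = (-x, y)`, `w(C') = (x', -y')`, `x, x', y ≥ 1`,
`y' ≥ 0`, making an angle `< 180°` (i.e. `x'·y - x·y' > 0`). -/
theorem good_cycle_characterization {V : Type*} [Fintype V]
    (E : V → V → Prop) (w₁ w₂ : V → V → ℤ) (v₀ : V) :
    (∃ (n : ℕ) (c : ℕ → V), 1 ≤ n ∧ c n = c 0 ∧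
        (∀ i < n, E (c i) (c (i + 1))) ∧
        Relation.ReflTransGen E v₀ (c 0) ∧
        0 ≤ ∑ i ∈ Finset.range n, w₁ (c i) (c (i + 1)) ∧
        0 < ∑ i ∈ Finset.range n, w₂ (c i) (c (i + 1)))
    ↔
    ((∃ (n : ℕ) (c : ℕ → V), 1 ≤ n ∧ c n = c 0 ∧
        (∀ i < n, E (c i) (c (i + 1))) ∧
        (∀ i < n, ∀ j < n, c i = c j → i = j) ∧
        Relation.ReflTransGen E v₀ (c 0) ∧
        0 ≤ ∑ i ∈ Finset.range n, w₁ (c i) (c (i + 1)) ∧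
        0 < ∑ i ∈ Finset.range n, w₂ (c i) (c (i + 1)))
      ∨
      (∃ (n n' : ℕ) (c c' : ℕ → V) (x x' y y' : ℤ),
        1 ≤ n ∧ c n = c 0 ∧ (∀ i < n, E (c i) (c (i + 1))) ∧
        (∀ i < n, ∀ j < n, c i = c j → i = j) ∧
        1 ≤ n' ∧ c' n' = c' 0 ∧ (∀ i < n', E (c' i) (c' (i + 1))) ∧
        (∀ i < n', ∀ j < n', c' i = c' j → i = j) ∧
        Relation.ReflTransGen E v₀ (c 0) ∧
        Relation.ReflTransGen E (c 0) (c' 0) ∧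
        Relation.ReflTransGen E (c' 0) (c 0) ∧
        1 ≤ x ∧ 1 ≤ x' ∧ 1 ≤ y ∧ 0 ≤ y' ∧
        (∑ i ∈ Finset.range n, w₁ (c i) (c (i + 1))) = -x ∧
        (∑ i ∈ Finset.range n, w₂ (c i) (c (i + 1))) = y ∧
        (∑ i ∈ Finset.range n', w₁ (c' i) (c' (i + 1))) = x' ∧
        (∑ i ∈ Finset.range n', w₂ (c' i) (c' (i + 1))) = -y' ∧
        0 < x' * y - x * y')) :=
  good_cycle_characterization_general E w₁ w₂ v₀
end

section
/- In a finite 2-dimensional weighted directed graph, there exists a reachable multicycle 𝒞 (a finite multiset of simple cycles all lying in one strongly connected component reachable from the start vertex) with w₁(𝒞) ≥ 0 and w₂(𝒞) ≥ 0 if and only if either (1) one simple reachable cycle C satisfies w(C) ≥ (0,0), or (2) there exist two simple cycles C, C' in the same reachable strongly connected component with w(C) = (-x, y), w(C') = (x', -y'), where x, x', y are positive integers, y' a positive integer, and x'·y - x·y' ≥ 0. -/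
/-!
Only the weight vectors `(a i, b i)` of the cycles matter. Taking `x'` copies of `C` and `x`
copies of `C'` gives a multicycle of weight `(0, x'·y - x·y')`. Conversely, suppose no cycle of a
good multicycle has weight `≥ (0,0)`. Let `P` be its cycles of weight in the open second quadrant and
`N` those in the open fourth quadrant; the other cycles have weight `≤ (0,0)`, so the nonnegative
total forces `Σ_N a ≥ -Σ_P a ≥ 0` and `Σ_P b ≥ -Σ_N b ≥ 0` (and makes `P`, `N` nonempty). Summing
the determinants `a j · b i - a i · b j` over `P × N` gives
`(Σ_N a)(Σ_P b) - (Σ_P a)(Σ_N b) ≥ 0`, so one of them is nonnegative.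
-/

open Finset Relation

section OppositePair

variable {ι : Type*} {s : Finset ι} {a b : ι → ℤ}

lemma exists_neg_pos_of_sum_nonneg (hs : s.Nonempty) (hneg : ∀ i ∈ s, a i < 0 ∨ b i < 0)
    (ha : 0 ≤ ∑ i ∈ s, a i) (hb : 0 ≤ ∑ i ∈ s, b i) : ∃ i ∈ s, a i < 0 ∧ 0 < b i := by
  by_contra! h
  have hb_nonpos : ∀ i ∈ s, b i ≤ 0 := fun i hi => (hneg i hi).elim (h i hi) le_of_lt
  have hb_zero : ∀ i ∈ s, b i = 0 :=
    (sum_eq_zero_iff_of_nonpos hb_nonpos).1 (le_antisymm (sum_nonpos hb_nonpos) hb)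
  have ha_neg : ∀ i ∈ s, a i < 0 := fun i hi => (hneg i hi).resolve_right (by simp [hb_zero i hi])
  exact (sum_neg ha_neg hs).not_ge ha

lemma exists_nonneg_or_exists_opposite_pair (hs : s.Nonempty)
    (ha : 0 ≤ ∑ i ∈ s, a i) (hb : 0 ≤ ∑ i ∈ s, b i) :
    (∃ i ∈ s, 0 ≤ a i ∧ 0 ≤ b i) ∨
      ∃ i ∈ s, ∃ j ∈ s, a i < 0 ∧ 0 < b i ∧ 0 < a j ∧ b j < 0 ∧ 0 ≤ a j * b i - a i * b j := by
  by_contra! h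
  obtain ⟨hnot, hdet⟩ := h
  have hneg : ∀ i ∈ s, a i < 0 ∨ b i < 0 := fun i hi => (lt_or_ge (a i) 0).imp_right (hnot i hi)
  set P := s.filter fun i => a i < 0 ∧ 0 < b i
  set N := s.filter fun j => 0 < a j ∧ b j < 0
  have hP : P.Nonempty := by
    obtain ⟨i, hi, hi'⟩ := exists_neg_pos_of_sum_nonneg hs hneg ha hb
    exact ⟨i, mem_filter.2 ⟨hi, hi'⟩⟩
  have hN : N.Nonempty := by
    obtain ⟨j, hj, hbj, haj⟩ :=
      exists_neg_pos_of_sum_nonneg hs (fun i hi => (hneg i hi).symm) hb ha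
    exact ⟨j, mem_filter.2 ⟨hj, haj, hbj⟩⟩
  have hsplit : ∑ i ∈ s, a i ≤ ∑ i ∈ P, a i + ∑ j ∈ N, a j ∧
      ∑ i ∈ s, b i ≤ ∑ i ∈ P, b i + ∑ j ∈ N, b j := by
    simp only [P, N, sum_filter, ← sum_add_distrib]
    constructor <;> refine sum_le_sum fun i hi => ?_ <;> have := hneg i hi <;> split_ifs <;> omega
  have hPa : ∑ i ∈ P, a i ≤ 0 := sum_nonpos fun i hi => (mem_filter.1 hi).2.1.le
  have hNb : ∑ j ∈ N, b j ≤ 0 := sum_nonpos fun j hj => (mem_filter.1 hj).2.2.le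
  have hdet_sum : ∑ i ∈ P, ∑ j ∈ N, (a j * b i - a i * b j) < 0 :=
    sum_neg (fun i hi => sum_neg (fun j hj => by
      simp only [P, N, mem_filter] at hi hj
      exact hdet i hi.1 j hj.1 hi.2.1 hi.2.2 hj.2.1 hj.2.2) hN) hP
  have hdet_sum_eq : ∑ i ∈ P, ∑ j ∈ N, (a j * b i - a i * b j) =
      (∑ j ∈ N, a j) * (∑ i ∈ P, b i) - (∑ i ∈ P, a i) * (∑ j ∈ N, b j) := by
    rw [sum_mul_sum, sum_mul_sum, sum_comm (s := N)]
    simp only [sum_sub_distrib]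
  have hcross : (∑ i ∈ P, a i) * (∑ j ∈ N, b j) ≤ (∑ j ∈ N, a j) * (∑ i ∈ P, b i) := by
    rw [← neg_mul_neg]
    exact mul_le_mul (by linarith [hsplit.1]) (by linarith [hsplit.2]) (by linarith) (by linarith)
  linarith

end OppositePair

theorem good_multicycle_characterization_general {V : Type*}
    (E : V → V → Prop) (w₁ w₂ : V → V → ℤ) (v₀ : V) :
    (∃ (m : ℕ) (n : Fin m → ℕ) (c : Fin m → ℕ → V), 1 ≤ m ∧
        (∀ i, 1 ≤ n i) ∧
        (∀ i, c i (n i) = c i 0) ∧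
        (∀ i, ∀ j < n i, E (c i j) (c i (j + 1))) ∧
        (∀ i, ∀ j < n i, ∀ j' < n i, c i j = c i j' → j = j') ∧
        (∀ i, Relation.ReflTransGen E v₀ (c i 0)) ∧
        (∀ i i', Relation.ReflTransGen E (c i 0) (c i' 0)) ∧
        0 ≤ ∑ i, ∑ j ∈ Finset.range (n i), w₁ (c i j) (c i (j + 1)) ∧
        0 ≤ ∑ i, ∑ j ∈ Finset.range (n i), w₂ (c i j) (c i (j + 1)))
    ↔
    ((∃ (n : ℕ) (c : ℕ → V), 1 ≤ n ∧ c n = c 0 ∧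
        (∀ i < n, E (c i) (c (i + 1))) ∧
        (∀ i < n, ∀ j < n, c i = c j → i = j) ∧
        Relation.ReflTransGen E v₀ (c 0) ∧
        0 ≤ ∑ i ∈ Finset.range n, w₁ (c i) (c (i + 1)) ∧
        0 ≤ ∑ i ∈ Finset.range n, w₂ (c i) (c (i + 1)))
      ∨
      (∃ (n n' : ℕ) (c c' : ℕ → V) (x x' y y' : ℤ),
        1 ≤ n ∧ c n = c 0 ∧ (∀ i < n, E (c i) (c (i + 1))) ∧
        (∀ i < n, ∀ j < n, c i = c j → i = j) ∧
        1 ≤ n' ∧ c' n' = c' 0 ∧ (∀ i < n', E (c' i) (c' (i + 1))) ∧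
        (∀ i < n', ∀ j < n', c' i = c' j → i = j) ∧
        Relation.ReflTransGen E v₀ (c 0) ∧
        Relation.ReflTransGen E (c 0) (c' 0) ∧
        Relation.ReflTransGen E (c' 0) (c 0) ∧
        1 ≤ x ∧ 1 ≤ x' ∧ 1 ≤ y ∧ 1 ≤ y' ∧
        (∑ i ∈ Finset.range n, w₁ (c i) (c (i + 1))) = -x ∧
        (∑ i ∈ Finset.range n, w₂ (c i) (c (i + 1))) = y ∧
        (∑ i ∈ Finset.range n', w₁ (c' i) (c' (i + 1))) = x' ∧
        (∑ i ∈ Finset.range n', w₂ (c' i) (c' (i + 1))) = -y' ∧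
        0 ≤ x' * y - x * y')) := by
  constructor
  · rintro ⟨m, n, c, hm, hn, hcyc, hE, hinj, hreach, hscc, h₁, h₂⟩
    rcases exists_nonneg_or_exists_opposite_pair (s := univ) ⟨⟨0, hm⟩, mem_univ _⟩ h₁ h₂ with
      ⟨i, -, hi₁, hi₂⟩ | ⟨i, -, j, -, hi₁, hi₂, hj₁, hj₂, hdet⟩
    · exact .inl ⟨n i, c i, hn i, hcyc i, hE i, hinj i, hreach i, hi₁, hi₂⟩
    · refine .inr ⟨n i, n j, c i, c j, _, _, _, _, hn i, hcyc i, hE i, hinj i, hn j, hcyc j, hE j,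
        hinj j, hreach i, hscc i j, hscc j i, by omega, hj₁, hi₂, by omega, (neg_neg _).symm, rfl,
        rfl, (neg_neg _).symm, by linarith⟩
  · rintro (⟨n, c, hn, hcyc, hE, hinj, hreach, h₁, h₂⟩ |
      ⟨n, n', c, c', x, x', y, y', hn, hcyc, hE, hinj, hn', hcyc', hE', hinj', hreach, hcc', hc'c,
        hx, hx', -, -, h₁, h₂, h₁', h₂', hdet⟩)
    · exact ⟨1, fun _ => n, fun _ => c, le_rfl, fun _ => hn, fun _ => hcyc, fun _ => hE,
        fun _ => hinj, fun _ => hreach, fun _ _ => .refl, by simpa, by simpa⟩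
    · lift x to ℕ using by omega
      lift x' to ℕ using by omega
      refine ⟨x' + x, Fin.append (fun _ => n) (fun _ => n'), Fin.append (fun _ => c) (fun _ => c'),
        by omega, ?_, ?_, ?_, ?_, ?_, ?_, ?_, ?_⟩ <;>
        simp only [Fin.forall_fin_add, Fin.append_left, Fin.append_right, Fin.sum_univ_add,
          sum_const, card_univ, Fintype.card_fin, nsmul_eq_mul]
      · exact ⟨fun _ => hn, fun _ => hn'⟩
      · exact ⟨fun _ => hcyc, fun _ => hcyc'⟩
      · exact ⟨fun _ => hE, fun _ => hE'⟩
      · exact ⟨fun _ => hinj, fun _ => hinj'⟩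
      · exact ⟨fun _ => hreach, fun _ => hreach.trans hcc'⟩
      · exact ⟨fun _ => ⟨fun _ => .refl, fun _ => hcc'⟩, fun _ => ⟨fun _ => hc'c, fun _ => .refl⟩⟩
      · rw [h₁, h₁']
        linarith
      · rw [h₂, h₂']
        linarith

/-- Characterization of the existence of a reachable good multicycle: a finite
2-dimensionally weighted directed graph has a nonempty finite family of simple
cycles, all lying in one strongly connected component reachable from `v₀`, with
total weight `≥ (0,0)`, iff either (1) a single reachable simple cycle has weight
`≥ (0,0)`, or (2) there are two simple cycles `C, C'` in the same reachable
strongly connected component with `w(C) = (-x, y)`, `w(C') = (x', -y')`,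
`x, x', y, y' ≥ 1`, and `x'·y - x·y' ≥ 0`. -/
theorem good_multicycle_characterization {V : Type*} [Fintype V]
    (E : V → V → Prop) (w₁ w₂ : V → V → ℤ) (v₀ : V) :
    (∃ (m : ℕ) (n : Fin m → ℕ) (c : Fin m → ℕ → V), 1 ≤ m ∧
        (∀ i, 1 ≤ n i) ∧
        (∀ i, c i (n i) = c i 0) ∧
        (∀ i, ∀ j < n i, E (c i j) (c i (j + 1))) ∧
        (∀ i, ∀ j < n i, ∀ j' < n i, c i j = c i j' → j = j') ∧
        (∀ i, Relation.ReflTransGen E v₀ (c i 0)) ∧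
        (∀ i i', Relation.ReflTransGen E (c i 0) (c i' 0)) ∧
        0 ≤ ∑ i, ∑ j ∈ Finset.range (n i), w₁ (c i j) (c i (j + 1)) ∧
        0 ≤ ∑ i, ∑ j ∈ Finset.range (n i), w₂ (c i j) (c i (j + 1)))
    ↔
    ((∃ (n : ℕ) (c : ℕ → V), 1 ≤ n ∧ c n = c 0 ∧
        (∀ i < n, E (c i) (c (i + 1))) ∧
        (∀ i < n, ∀ j < n, c i = c j → i = j) ∧
        Relation.ReflTransGen E v₀ (c 0) ∧
        0 ≤ ∑ i ∈ Finset.range n, w₁ (c i) (c (i + 1)) ∧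
        0 ≤ ∑ i ∈ Finset.range n, w₂ (c i) (c (i + 1)))
      ∨
      (∃ (n n' : ℕ) (c c' : ℕ → V) (x x' y y' : ℤ),
        1 ≤ n ∧ c n = c 0 ∧ (∀ i < n, E (c i) (c (i + 1))) ∧
        (∀ i < n, ∀ j < n, c i = c j → i = j) ∧
        1 ≤ n' ∧ c' n' = c' 0 ∧ (∀ i < n', E (c' i) (c' (i + 1))) ∧
        (∀ i < n', ∀ j < n', c' i = c' j → i = j) ∧
        Relation.ReflTransGen E v₀ (c 0) ∧
        Relation.ReflTransGen E (c 0) (c' 0) ∧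
        Relation.ReflTransGen E (c' 0) (c 0) ∧
        1 ≤ x ∧ 1 ≤ x' ∧ 1 ≤ y ∧ 1 ≤ y' ∧
        (∑ i ∈ Finset.range n, w₁ (c i) (c (i + 1))) = -x ∧
        (∑ i ∈ Finset.range n, w₂ (c i) (c (i + 1))) = y ∧
        (∑ i ∈ Finset.range n', w₁ (c' i) (c' (i + 1))) = x' ∧
        (∑ i ∈ Finset.range n', w₂ (c' i) (c' (i + 1))) = -y' ∧
        0 ≤ x' * y - x * y')) :=
  good_multicycle_characterization_general E w₁ w₂ v₀
end

section
/- Consider the two-vertex graph with vertices v₀, v₁ and edges: self-loop on v₀ with weight (1,-1), self-loop on v₁ with weight (-1,1), edge v₀→v₁ with weight (0,-1), edge v₁→v₀ with weight (0,-1). Then no eventually periodic infinite path ρ from v₀ satisfies both: (a) there exists c₀ ∈ ℕ with c₀ + w₁(ρ[0,k]) ≥ 0 for all k, and (b) liminf_{k→∞} w₂(ρ[0,k])/k ≥ 0. -/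
/-!
The tail of an eventually periodic path repeats one cycle of length `n`, of weight `(D₁, D₂)`,
so the partial sums at the times `p + m n` are affine in `m` with slope `(D₁, D₂)`. The energy
condition then forces `D₁ ≥ 0`, and the mean-payoff condition forces `D₂ ≥ 0`, because the
averages at these times converge to `D₂ / n`. But every edge has `w₁ + w₂ ≤ 0`, with equality
only on the loops, so `D₁ + D₂ ≥ 0` keeps the cycle at a single vertex, where one of the two
loop weights is `-1`.
-/

open Finset Filter Topology

theorem Int.nonneg_of_forall_nonneg_add_mul {a d : ℤ} (h : ∀ m : ℕ, 0 ≤ a + m * d) : 0 ≤ d := by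
  by_contra! hd
  have := h (a.toNat + 1)
  have := Int.self_le_toNat a
  push_cast at *
  nlinarith

theorem tendsto_add_mul_div_add_mul (a d : ℤ) (p : ℕ) {n : ℕ} (hn : 0 < n) :
    Tendsto (fun m : ℕ => ((a + m * d : ℤ) : ℝ) / ((p + m * n : ℕ) : ℝ)) atTop
      (𝓝 ((d : ℝ) / n)) := by
  have hlim : Tendsto (fun m : ℕ => ((a : ℝ) / m + d) / ((p : ℝ) / m + n)) atTop
      (𝓝 ((0 + d) / (0 + n))) :=
    ((tendsto_const_div_atTop_nhds_zero_nat _).add_const _).div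
      ((tendsto_const_div_atTop_nhds_zero_nat _).add_const _) (by positivity)
  rw [zero_add, zero_add] at hlim
  refine hlim.congr' ?_
  filter_upwards [eventually_gt_atTop 0] with m hm
  have : (m : ℝ) ≠ 0 := by positivity
  push_cast
  field_simp

theorem liminf_le_of_tendsto_comp {u : ℕ → ℝ} (hu : IsBoundedUnder (· ≥ ·) atTop u)
    {φ : ℕ → ℕ} (hφ : Tendsto φ atTop atTop) {L : ℝ} (hL : Tendsto (u ∘ φ) atTop (𝓝 L)) :
    liminf u atTop ≤ L :=
  (hφ.liminf_le_liminf_comp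
    (by simpa [IsCoboundedUnder, Filter.map_map] using hL.isCoboundedUnder_ge) hu).trans_eq
    hL.liminf_eq

section PrefixWeight

variable {V : Type*}

def prefixWeight (w : V → V → ℤ) (ρ : ℕ → V) (k : ℕ) : ℤ :=
  ∑ i ∈ range k, w (ρ i) (ρ (i + 1))

theorem prefixWeight_add (w : V → V → ℤ) (ρ : ℕ → V) (a b : ℕ) :
    prefixWeight w ρ (a + b) = prefixWeight w ρ a + prefixWeight w (fun j => ρ (a + j)) b := by
  simp only [prefixWeight, sum_range_add, add_assoc]

theorem Function.Periodic.prefixWeight_mul {w : V → V → ℤ} {σ : ℕ → V} {n : ℕ}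
    (hσ : Function.Periodic σ n) (m : ℕ) :
    prefixWeight w σ (m * n) = m * prefixWeight w σ n := by
  induction m with
  | zero => simp [prefixWeight]
  | succ m ih =>
    have hshift : (fun j => σ (n + j)) = σ := funext fun j => by rw [add_comm]; exact hσ j
    rw [add_one_mul, add_comm, prefixWeight_add, hshift, ih]
    push_cast
    ring

theorem prefixWeight_add_mul_of_periodic {w : V → V → ℤ} {ρ : ℕ → V} {p n : ℕ}
    (hper : Function.Periodic (fun j => ρ (p + j)) n) (m : ℕ) :
    prefixWeight w ρ (p + m * n) =
      prefixWeight w ρ p + m * prefixWeight w (fun j => ρ (p + j)) n := by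
  rw [prefixWeight_add, hper.prefixWeight_mul]

theorem isBoundedUnder_ge_prefixWeight_div [Finite V] (w : V → V → ℤ) (ρ : ℕ → V) :
    IsBoundedUnder (· ≥ ·) atTop (fun k : ℕ => (prefixWeight w ρ k : ℝ) / k) := by
  obtain ⟨c, hc⟩ := (Set.finite_range fun e : V × V => w e.1 e.2).bddBelow
  refine isBoundedUnder_of_eventually_ge (a := (c : ℝ)) ?_
  filter_upwards [eventually_gt_atTop 0] with k hk
  have hsum : k * c ≤ prefixWeight w ρ k := by
    simpa [prefixWeight] using
      card_nsmul_le_sum (range k) _ c fun i _ => hc ⟨(ρ i, ρ (i + 1)), rfl⟩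
  rw [le_div_iff₀ (by exact_mod_cast hk), mul_comm]
  exact_mod_cast hsum

theorem prefixWeight_period_nonneg_of_forall_nonneg {w : V → V → ℤ} {ρ : ℕ → V} {p n : ℕ}
    (hper : Function.Periodic (fun j => ρ (p + j)) n) {c : ℤ}
    (h : ∀ k, 0 ≤ c + prefixWeight w ρ k) : 0 ≤ prefixWeight w (fun j => ρ (p + j)) n :=
  Int.nonneg_of_forall_nonneg_add_mul (a := c + prefixWeight w ρ p) fun m => by
    simpa [prefixWeight_add_mul_of_periodic hper, add_assoc] using h (p + m * n)

theorem prefixWeight_period_nonneg_of_liminf_nonneg [Finite V] {w : V → V → ℤ} {ρ : ℕ → V}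
    {p n : ℕ} (hn : 0 < n) (hper : Function.Periodic (fun j => ρ (p + j)) n)
    (h : 0 ≤ liminf (fun k : ℕ => (prefixWeight w ρ k : ℝ) / k) atTop) :
    0 ≤ prefixWeight w (fun j => ρ (p + j)) n := by
  have hφ : Tendsto (fun m : ℕ => p + m * n) atTop atTop :=
    tendsto_atTop_mono (fun m => le_add_left (Nat.le_mul_of_pos_right m hn)) tendsto_id
  have hlim := liminf_le_of_tendsto_comp (isBoundedUnder_ge_prefixWeight_div w ρ) hφ
    ((tendsto_add_mul_div_add_mul (prefixWeight w ρ p)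
      (prefixWeight w (fun j => ρ (p + j)) n) p hn).congr fun m => by
      simp [prefixWeight_add_mul_of_periodic hper])
  have : (0 : ℝ) ≤ prefixWeight w (fun j => ρ (p + j)) n := by
    simpa using (le_div_iff₀ (by exact_mod_cast hn : (0 : ℝ) < n)).1 (h.trans hlim)
  exact_mod_cast this

end PrefixWeight

def energyWeight : Bool → Bool → ℤ
  | false, false => 1
  | true, true => -1
  | _, _ => 0

def meanPayoffWeight : Bool → Bool → ℤ
  | false, false => -1
  | true, true => 1
  | _, _ => -1

theorem energyWeight_add_meanPayoffWeight_nonpos (u v : Bool) :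
    energyWeight u v + meanPayoffWeight u v ≤ 0 := by
  cases u <;> cases v <;> decide

theorem eq_of_energyWeight_add_meanPayoffWeight_eq_zero {u v : Bool}
    (h : energyWeight u v + meanPayoffWeight u v = 0) : u = v := by
  revert h
  cases u <;> cases v <;> decide

theorem prefixWeight_energy_neg_or_meanPayoff_neg (σ : ℕ → Bool) {n : ℕ} (hn : 0 < n) :
    prefixWeight energyWeight σ n < 0 ∨ prefixWeight meanPayoffWeight σ n < 0 := by
  by_contra! h
  have hloop : ∀ i < n, σ (i + 1) = σ i := by
    have hsum : ∑ i ∈ range n,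
        (energyWeight (σ i) (σ (i + 1)) + meanPayoffWeight (σ i) (σ (i + 1))) = 0 :=
      le_antisymm (sum_nonpos fun i _ => energyWeight_add_meanPayoffWeight_nonpos _ _)
        (by rw [sum_add_distrib]; exact add_nonneg h.1 h.2)
    intro i hi
    exact (eq_of_energyWeight_add_meanPayoffWeight_eq_zero <|
      (sum_eq_zero_iff_of_nonpos fun i _ => energyWeight_add_meanPayoffWeight_nonpos _ _).1
        hsum i (mem_range.2 hi)).symm
  have hconst : ∀ i ≤ n, σ i = σ 0 := by
    intro i hi
    induction i with
    | zero => rfl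
    | succ i ih => rw [hloop i hi, ih (by omega)]
  have hweight (w : Bool → Bool → ℤ) : prefixWeight w σ n = n * w (σ 0) (σ 0) := by
    rw [prefixWeight, sum_congr rfl fun i hi => by
      rw [hconst i (mem_range.1 hi).le, hconst (i + 1) (mem_range.1 hi)], sum_const, card_range,
      nsmul_eq_mul]
  rw [hweight, hweight] at h
  generalize σ 0 = b at h
  cases b <;> simp [energyWeight, meanPayoffWeight] at h <;> omega

/-- In the two-vertex graph (`false = v₀`, `true = v₁`) with loop weights
`(1,-1)` on `v₀`, `(-1,1)` on `v₁` and weights `(0,-1)` on both connecting edges,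
no eventually periodic infinite path from `v₀` satisfies both the energy
condition on dimension 1 and mean-payoff-inf `≥ 0` on dimension 2. -/
theorem no_finite_memory_win (w₁ w₂ : Bool → Bool → ℤ)
    (h00 : w₁ false false = 1 ∧ w₂ false false = -1)
    (h11 : w₁ true true = -1 ∧ w₂ true true = 1)
    (h01 : w₁ false true = 0 ∧ w₂ false true = -1)
    (h10 : w₁ true false = 0 ∧ w₂ true false = -1) :
    ∀ ρ : ℕ → Bool, ρ 0 = false →
      (∃ p n : ℕ, 1 ≤ n ∧ ∀ k : ℕ, p ≤ k → ρ (k + n) = ρ k) →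
      ¬((∃ c₀ : ℕ, ∀ k : ℕ,
            0 ≤ (c₀ : ℤ) + ∑ i ∈ Finset.range k, w₁ (ρ i) (ρ (i + 1))) ∧
        0 ≤ Filter.atTop.liminf
            (fun k : ℕ => ((∑ i ∈ Finset.range k, w₂ (ρ i) (ρ (i + 1)) : ℤ) : ℝ) / k)) := by
  obtain rfl : w₁ = energyWeight := by
    funext u v; cases u <;> cases v <;> simp [energyWeight, h00, h11, h01, h10]
  obtain rfl : w₂ = meanPayoffWeight := by
    funext u v; cases u <;> cases v <;> simp [meanPayoffWeight, h00, h11, h01, h10]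
  rintro ρ - ⟨p, n, hn, hper⟩ ⟨⟨c₀, henergy⟩, hmeanPayoff⟩
  have hperiodic : Function.Periodic (fun j => ρ (p + j)) n := fun j => by
    simpa only [add_assoc] using hper (p + j) (by omega)
  rcases prefixWeight_energy_neg_or_meanPayoff_neg (fun j => ρ (p + j)) hn with h | h
  · exact h.not_ge (prefixWeight_period_nonneg_of_forall_nonneg hperiodic henergy)
  · exact h.not_ge (prefixWeight_period_nonneg_of_liminf_nonneg hn hperiodic hmeanPayoff)
end

section
/- Consider the two-vertex graph with vertices v₀, v₁ and edges: self-loop on v₀ with weight (1,-1), self-loop on v₁ with weight (-1,1), edge v₀→v₁ with weight (0,-1), edge v₁→v₀ with weight (0,-1). Then there exists an infinite path ρ from v₀ (not eventually periodic) such that w₁(ρ[0,k]) ≥ 0 for all k and liminf_{k→∞} w₂(ρ[0,k])/k ≥ 0. In particular, the path that at round Z (for Z = 1, 2, 3, …) loops Z times on v₀, moves to v₁, loops Z times on v₁, and returns to v₀ has these properties. -/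
/-!
Walk in rounds: round `m` stays `m + 1` steps on `v₀`, crosses to `v₁`, stays `m + 1` steps
there and crosses back. The two loops cancel on each coordinate, so after `m` complete rounds
the first coordinate is back at `0` while the second has lost `2m`, one unit per crossing.
Inside a round the first coordinate climbs to `m + 1` and comes back down, and the second
drifts by at most `m + 2`. Round `m` starts at time `m (m + 3)`, so at time `k` the deficit of
the second coordinate is `O(√k)` and its mean tends to `0`. Since the rounds get longer and
longer, the walk is not eventually periodic.
-/

open Finset Filter Topology

lemma eq_of_periodic_of_constant_run {α : Type*} {ρ : ℕ → α} {p n m : ℕ} (hn : 0 < n)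
    (hper : ∀ k, p ≤ k → ρ (k + n) = ρ k) (hpm : p ≤ m) (hrun : ∀ j < n, ρ (m + j) = ρ m) :
    ∀ k, m ≤ k → ρ k = ρ m := by
  intro k
  induction k using Nat.strong_induction_on with
  | _ k ih =>
    intro hmk
    by_cases hk : k < m + n
    · obtain ⟨j, rfl⟩ := Nat.exists_eq_add_of_le hmk
      exact hrun j (by omega)
    · obtain ⟨l, rfl⟩ : ∃ l, k = l + n := ⟨k - n, by omega⟩
      rw [hper l (by omega), ih l (by omega) (by omega)]

lemma le_liminf_of_tendsto_of_eventually_le {ι β : Type*} [ConditionallyCompleteLinearOrder β]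
    [TopologicalSpace β] [OrderTopology β] {f : Filter ι} [f.NeBot] {u g : ι → β} {c : β}
    (hg : Tendsto g f (𝓝 c)) (hgu : ∀ᶠ i in f, g i ≤ u i) (hu : IsBoundedUnder (· ≤ ·) f u) :
    c ≤ liminf u f := by
  rw [← hg.liminf_eq]
  exact liminf_le_liminf hgu hg.isBoundedUnder_ge hu.isCoboundedUnder_ge

def pathWeight {α : Type*} (w : α → α → ℤ) (ρ : ℕ → α) (k : ℕ) : ℤ :=
  ∑ i ∈ range k, w (ρ i) (ρ (i + 1))

section PathWeight

variable {α : Type*} {w : α → α → ℤ} {ρ : ℕ → α}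

lemma pathWeight_succ (k : ℕ) : pathWeight w ρ (k + 1) = pathWeight w ρ k + w (ρ k) (ρ (k + 1)) :=
  sum_range_succ _ k

lemma pathWeight_add (k n : ℕ) : pathWeight w ρ (k + n) =
    pathWeight w ρ k + ∑ j ∈ range n, w (ρ (k + j)) (ρ (k + j + 1)) :=
  sum_range_add _ k n

lemma pathWeight_le {c : ℤ} (hw : ∀ a b, w a b ≤ c) (k : ℕ) : pathWeight w ρ k ≤ k * c := by
  simpa [pathWeight] using sum_le_sum fun i (_ : i ∈ range k) => hw (ρ i) (ρ (i + 1))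

end PathWeight

namespace InfiniteMemoryPath

/-- Round `m` is the paper's round `Z = m + 1`; it lasts `2 * m + 4` steps, so it starts at
`∑ n < m, (2 * n + 4) = m * (m + 3)`. -/
def roundStart (m : ℕ) : ℕ := m * (m + 3)

lemma roundStart_succ (m : ℕ) : roundStart (m + 1) = roundStart m + (2 * m + 4) := by
  unfold roundStart; ring

lemma roundStart_strictMono : StrictMono roundStart :=
  strictMono_nat_of_lt_succ fun m => by rw [roundStart_succ]; omega

lemma le_roundStart (m : ℕ) : m ^ 2 + m ≤ roundStart m := by
  unfold roundStart; nlinarith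

lemma exists_lt_roundStart_succ (k : ℕ) : ∃ m, k < roundStart (m + 1) :=
  ⟨k, by have := le_roundStart (k + 1); nlinarith⟩

def roundOf (k : ℕ) : ℕ := Nat.find (exists_lt_roundStart_succ k)

lemma roundStart_roundOf_le (k : ℕ) : roundStart (roundOf k) ≤ k := by
  rcases h : roundOf k with _ | n
  · exact Nat.zero_le k
  · exact not_lt.1 (Nat.find_min (exists_lt_roundStart_succ k) (show n < roundOf k by omega))

lemma exists_eq_roundStart_add (k : ℕ) : ∃ m, ∃ r < 2 * m + 4, k = roundStart m + r := by
  have hlt : k < roundStart (roundOf k + 1) := Nat.find_spec (exists_lt_roundStart_succ k)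
  have hle := roundStart_roundOf_le k
  rw [roundStart_succ] at hlt
  exact ⟨roundOf k, k - roundStart (roundOf k), by omega, by omega⟩

lemma roundOf_roundStart_add {m r : ℕ} (hr : r < 2 * m + 4) : roundOf (roundStart m + r) = m := by
  rw [roundOf, Nat.find_eq_iff]
  refine ⟨by rw [roundStart_succ]; omega, fun n hn => ?_⟩
  have := roundStart_strictMono.monotone (show n + 1 ≤ m by omega)
  omega

lemma sq_roundOf_le (k : ℕ) : roundOf k ^ 2 ≤ k :=
  (Nat.le_add_right _ _).trans ((le_roundStart _).trans (roundStart_roundOf_le k))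

def path (k : ℕ) : Bool := decide (roundStart (roundOf k) + roundOf k + 2 ≤ k)

lemma path_roundStart_add {m r : ℕ} (hr : r < 2 * m + 4) :
    path (roundStart m + r) = decide (m + 2 ≤ r) := by
  simp only [path, roundOf_roundStart_add hr]
  exact decide_eq_decide.2 (by omega)

lemma path_zero : path 0 = false := by
  simpa [roundStart] using path_roundStart_add (m := 0) (r := 0) (by omega)

lemma not_eventually_periodic_path :
    ¬∃ p n : ℕ, 1 ≤ n ∧ ∀ k, p ≤ k → path (k + n) = path k := by
  rintro ⟨p, n, hn, hper⟩
  set m := p + n with hm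
  have hpm : p ≤ roundStart m := by have := le_roundStart m; omega
  have hv₀ : ∀ j < m + 2, path (roundStart m + j) = false := fun j hj => by
    rw [path_roundStart_add (by omega)]; simpa using hj
  have hstart : path (roundStart m) = false := by simpa using hv₀ 0 (by omega)
  have hconst := eq_of_periodic_of_constant_run hn hper hpm fun j hj =>
    (hv₀ j (by omega)).trans hstart.symm
  have hv₁ := hconst (roundStart m + (m + 2)) (by omega)
  rw [path_roundStart_add (by omega), hstart] at hv₁
  simp at hv₁

section RoundWeights

variable (w : Bool → Bool → ℤ)

lemma pathWeight_roundStart_add_of_le {m r : ℕ} (hr : r ≤ m + 1) :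
    pathWeight w path (roundStart m + r) = pathWeight w path (roundStart m) + r * w false false := by
  have hterm : ∀ j ∈ range r,
      w (path (roundStart m + j)) (path (roundStart m + j + 1)) = w false false := by
    intro j hj
    rw [mem_range] at hj
    rw [path_roundStart_add (by omega), add_assoc, path_roundStart_add (by omega)]
    simp only [decide_eq_false (show ¬m + 2 ≤ j by omega),
      decide_eq_false (show ¬m + 2 ≤ j + 1 by omega)]
  rw [pathWeight_add, sum_congr rfl hterm, sum_const, card_range, nsmul_eq_mul]

lemma pathWeight_roundStart_add_add {m i : ℕ} (hi : i ≤ m + 1) :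
    pathWeight w path (roundStart m + (m + 2 + i)) = pathWeight w path (roundStart m) +
      (m + 1) * w false false + w false true + i * w true true := by
  have hterm : ∀ j ∈ range i,
      w (path (roundStart m + (m + 2) + j)) (path (roundStart m + (m + 2) + j + 1)) =
        w true true := by
    intro j hj
    rw [mem_range] at hj
    rw [show roundStart m + (m + 2) + j = roundStart m + (m + 2 + j) by ring,
      show roundStart m + (m + 2 + j) + 1 = roundStart m + (m + 2 + j + 1) by ring,
      path_roundStart_add (by omega), path_roundStart_add (by omega)]
    simp only [decide_eq_true (show m + 2 ≤ m + 2 + j by omega),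
      decide_eq_true (show m + 2 ≤ m + 2 + j + 1 by omega)]
  have hcross : pathWeight w path (roundStart m + (m + 2)) =
      pathWeight w path (roundStart m) + (m + 1) * w false false + w false true := by
    have hv₀ : path (roundStart m + (m + 1)) = false := by
      rw [path_roundStart_add (by omega)]; simp
    have hv₁ : path (roundStart m + (m + 1) + 1) = true := by
      rw [add_assoc, path_roundStart_add (by omega)]; simp
    rw [show m + 2 = m + 1 + 1 from rfl, ← add_assoc, pathWeight_succ, hv₀, hv₁,
      pathWeight_roundStart_add_of_le w le_rfl]
    push_cast
    ring
  rw [← add_assoc, pathWeight_add, hcross, sum_congr rfl hterm, sum_const, card_range,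
    nsmul_eq_mul]

lemma pathWeight_roundStart_succ (m : ℕ) :
    pathWeight w path (roundStart (m + 1)) = pathWeight w path (roundStart m) +
      (m + 1) * (w false false + w true true) + w false true + w true false := by
  have hlast : path (roundStart m + (m + 2 + (m + 1))) = true := by
    rw [path_roundStart_add (by omega)]; simp
  have hnext : path (roundStart (m + 1)) = false := by
    simpa using path_roundStart_add (m := m + 1) (r := 0) (by omega)
  have hlen : roundStart (m + 1) = roundStart m + (m + 2 + (m + 1)) + 1 := by
    rw [roundStart_succ]; ring
  rw [hlen, pathWeight_succ, ← hlen, hnext, hlast,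
    pathWeight_roundStart_add_add w (le_refl (m + 1))]
  push_cast
  ring

lemma pathWeight_roundStart (hw : w false false + w true true = 0) (m : ℕ) :
    pathWeight w path (roundStart m) = m * (w false true + w true false) := by
  induction m with
  | zero => simp [roundStart, pathWeight]
  | succ m ih =>
    rw [pathWeight_roundStart_succ, ih, hw]
    push_cast
    ring

end RoundWeights

def weight₁ : Bool → Bool → ℤ
  | false, false => 1
  | true, true => -1
  | _, _ => 0

def weight₂ : Bool → Bool → ℤ
  | true, true => 1
  | _, _ => -1

lemma weight₂_le_one (a b : Bool) : weight₂ a b ≤ 1 := by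
  cases a <;> cases b <;> decide

lemma pathWeight_weight₁_nonneg (k : ℕ) : 0 ≤ pathWeight weight₁ path k := by
  obtain ⟨m, r, hr, rfl⟩ := exists_eq_roundStart_add k
  have hstart := pathWeight_roundStart weight₁ rfl m
  rcases le_or_gt r (m + 1) with hr' | hr'
  · rw [pathWeight_roundStart_add_of_le weight₁ hr', hstart]
    simp [weight₁]
  · obtain ⟨i, rfl⟩ := Nat.exists_eq_add_of_lt hr'
    rw [show m + 1 + i + 1 = m + 2 + i by ring,
      pathWeight_roundStart_add_add weight₁ (by omega), hstart]
    simp only [weight₁]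
    omega

lemma neg_le_pathWeight_weight₂ (k : ℕ) :
    -(3 * roundOf k + 2 : ℤ) ≤ pathWeight weight₂ path k := by
  obtain ⟨m, r, hr, rfl⟩ := exists_eq_roundStart_add k
  have hstart := pathWeight_roundStart weight₂ rfl m
  rw [roundOf_roundStart_add hr]
  rcases le_or_gt r (m + 1) with hr' | hr'
  · rw [pathWeight_roundStart_add_of_le weight₂ hr', hstart]
    simp only [weight₂]
    omega
  · obtain ⟨i, rfl⟩ := Nat.exists_eq_add_of_lt hr'
    rw [show m + 1 + i + 1 = m + 2 + i by ring,
      pathWeight_roundStart_add_add weight₂ (by omega), hstart]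
    simp only [weight₂]
    omega

lemma neg_div_sqrt_le_mean_weight₂ {k : ℕ} (hk : 1 ≤ k) :
    -5 / √(k : ℝ) ≤ (pathWeight weight₂ path k : ℝ) / k := by
  have hkR : (1 : ℝ) ≤ k := by exact_mod_cast hk
  have hsqrt : 1 ≤ √(k : ℝ) := Real.one_le_sqrt.2 hkR
  have hround : (roundOf k : ℝ) ≤ √(k : ℝ) :=
    (Real.le_sqrt (by positivity) (by positivity)).2 (by exact_mod_cast sq_roundOf_le k)
  have hW : -(3 * (roundOf k : ℝ) + 2) ≤ pathWeight weight₂ path k := by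
    exact_mod_cast neg_le_pathWeight_weight₂ k
  rw [div_le_div_iff₀ (by positivity) (by positivity)]
  nlinarith [Real.mul_self_sqrt (show (0 : ℝ) ≤ k by positivity)]

end InfiniteMemoryPath

open InfiniteMemoryPath

/-- In the two-vertex graph (`false = v₀`, `true = v₁`) with loop weights
`(1,-1)` on `v₀`, `(-1,1)` on `v₁` and weights `(0,-1)` on both connecting edges,
there exists an infinite path from `v₀`, not eventually periodic, whose
first-coordinate energy never drops below `0` and whose second-coordinate
mean-payoff-inf is `≥ 0`. -/
theorem infinite_memory_win (w₁ w₂ : Bool → Bool → ℤ)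
    (h00 : w₁ false false = 1 ∧ w₂ false false = -1)
    (h11 : w₁ true true = -1 ∧ w₂ true true = 1)
    (h01 : w₁ false true = 0 ∧ w₂ false true = -1)
    (h10 : w₁ true false = 0 ∧ w₂ true false = -1) :
    ∃ ρ : ℕ → Bool, ρ 0 = false ∧
      (∀ k : ℕ, 0 ≤ ∑ i ∈ Finset.range k, w₁ (ρ i) (ρ (i + 1))) ∧
      0 ≤ Filter.atTop.liminf
          (fun k : ℕ => ((∑ i ∈ Finset.range k, w₂ (ρ i) (ρ (i + 1)) : ℤ) : ℝ) / k) ∧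
      ¬(∃ p n : ℕ, 1 ≤ n ∧ ∀ k : ℕ, p ≤ k → ρ (k + n) = ρ k) := by
  obtain rfl : w₁ = weight₁ := by
    funext a b; cases a <;> cases b <;> simp [weight₁, h00, h11, h01, h10]
  obtain rfl : w₂ = weight₂ := by
    funext a b; cases a <;> cases b <;> simp [weight₂, h00, h11, h01, h10]
  refine ⟨path, path_zero, pathWeight_weight₁_nonneg, ?_, not_eventually_periodic_path⟩
  have hlim : Tendsto (fun k : ℕ => -5 / √(k : ℝ)) atTop (𝓝 0) :=
    tendsto_const_nhds.div_atTop (Real.tendsto_sqrt_atTop.comp tendsto_natCast_atTop_atTop)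
  have hbdd : IsBoundedUnder (· ≤ ·) atTop
      (fun k : ℕ => (pathWeight weight₂ path k : ℝ) / k) :=
    isBoundedUnder_of ⟨1, fun k => div_le_one_of_le₀
      (by exact_mod_cast (pathWeight_le (ρ := path) weight₂_le_one k).trans_eq (mul_one _))
      (Nat.cast_nonneg k)⟩
  exact le_liminf_of_tendsto_of_eventually_le hlim
    (eventually_atTop.2 ⟨1, fun k hk => neg_div_sqrt_le_mean_weight₂ hk⟩) hbdd
end

section
/- Consider the two-vertex graph with vertices v₀, v₁, self-loop on v₁ of weight (-1, 1), and edges v₀→v₁ and v₁→v₀ each of weight (W, -W) for a positive integer W. Let ε = 1/(2W). Then there is no simple cycle π in any product of this graph with a memory structure of at most 2W total states such that the eventually-periodic path repeating π satisfies both the energy condition on dimension 1 (partial sums bounded below) and average second-coordinate weight > -ε. Formally: there are no α, β ∈ ℕ with 0 < 2α + β ≤ 2W, 2αW - β ≥ 0, and (-2αW + β)/(2α + β) > -1/(2W). -/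
/-- Arithmetic impossibility showing pseudo-polynomial memory is needed: for
`W ≥ 1` there are no `α, β ∈ ℕ` with `0 < 2α + β ≤ 2W`, `2αW - β ≥ 0`, and
`(-2αW + β)/(2α + β) > -1/(2W)`. -/
theorem pseudo_poly_memory_lower_bound (W : ℕ) (hW : 1 ≤ W) :
    ¬ ∃ α β : ℕ,
      0 < 2 * α + β ∧ 2 * α + β ≤ 2 * W ∧
      (0 : ℤ) ≤ 2 * (α : ℤ) * W - β ∧
      (-(2 * (α : ℝ) * W) + β) / (2 * α + β) > -(1 / (2 * W)) := by
  rintro ⟨α, β, h1, h2, h3, h4⟩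
  -- α ≥ 1
  have hα : 1 ≤ α := by
    rcases Nat.eq_zero_or_pos α with h | h
    · subst h
      simp at h3
      have : (β:ℤ) ≤ 0 := by linarith
      have : β = 0 := by exact_mod_cast le_antisymm this (by positivity)
      omega
    · exact h
  have hWpos : (0 : ℝ) < 2 * W := by positivity
  have hden : (0 : ℝ) < 2 * (α : ℝ) + β := by
    have : (0 : ℝ) < 2 * α := by positivity
    linarith [show (0:ℝ) ≤ (β:ℝ) from Nat.cast_nonneg β]
  -- cross multiply
  have h4' : (-1 : ℝ) / (2 * W) < (-(2 * (α : ℝ) * W) + β) / (2 * α + β) := by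
    rw [neg_div] at *
    simpa using h4
  have hcross := (div_lt_div_iff₀ hWpos hden).mp h4'
  -- hcross : -1 * (2α+β) < (-(2αW)+β) * (2W)
  have hZ : 2 * (W : ℤ) * (2 * α * W - β) < 2 * α + β := by
    have : ((2 * (W : ℤ) * (2 * α * W - β)) : ℝ) < ((2 * (α : ℤ) + β : ℤ) : ℝ) := by
      push_cast
      nlinarith [hcross]
    exact_mod_cast this
  set d : ℤ := 2 * (α : ℤ) * W - β with hd
  have h2' : (2 * α + β : ℤ) ≤ 2 * W := by exact_mod_cast h2
  have hd1 : d < 1 := by nlinarith [h3, hZ, h2', show (1:ℤ) ≤ (W:ℤ) from by exact_mod_cast hW]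
  have hd0 : d = 0 := le_antisymm (by omega) h3
  have hβ : (β : ℤ) = 2 * α * W := by omega
  have hα' : (1 : ℤ) ≤ (α : ℤ) := by exact_mod_cast hα
  nlinarith [h2', hβ, hα', show (1:ℤ) ≤ (W:ℤ) from by exact_mod_cast hW]
end

section
/- Suppose a : ℕ → ℤ is a weight sequence built as an infinite concatenation of blocks π₁, π₂, π₃, … such that for each i ≥ 1, writing ρᵢ = π₁⋯πᵢ, the total weight satisfies w(ρᵢ) > Bᵢ₊₁ - |ρᵢ|·εᵢ where εᵢ = 1/2^i and Bᵢ ∈ ℕ, and within block πᵢ every prefix of length k has weight > -Bᵢ - k·εᵢ. Then liminf_{k→∞} (1/k)·∑_{j<k} a(j) ≥ 0. -/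
/-!
Up to the end of block `i` the total weight is more than `B (i + 1) - L i / 2 ^ i`, and the
prefixes of block `i + 1` lose less than `B (i + 1) + k / 2 ^ (i + 1)`: the `B (i + 1)` cancels, so
every prefix sum ending inside block `i + 1` exceeds `-n / 2 ^ i`, where `n` is its length. As
`1 / 2 ^ i → 0`, the running averages are eventually above every `-ε`.
-/

open Filter Finset

theorem Filter.liminf_nonneg_of_forall_eventually_neg_le {α : Type*} {f : Filter α} {u : α → ℝ}
    (h : ∀ ε > 0, ∀ᶠ x in f, -ε ≤ u x) : 0 ≤ f.liminf u := by
  rw [liminf_eq]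
  by_cases hbdd : BddAbove {b | ∀ᶠ x in f, b ≤ u x}
  · by_contra! hneg
    have := le_csSup hbdd (h _ (half_pos (neg_pos.mpr hneg)))
    linarith
  · -- junk value: the `sSup` of a set of reals that is not bounded above is `0`
    rw [Real.sSup_of_not_bddAbove hbdd]

theorem StrictMono.exists_lt_le_succ {L : ℕ → ℕ} (hL : StrictMono L) {m n : ℕ} (hm : L m < n) :
    ∃ i, m ≤ i ∧ L i < n ∧ n ≤ L (i + 1) := by
  classical
  have hex : ∃ j, n ≤ L j := ⟨n, hL.le_apply⟩
  have hlt : m < Nat.find hex := by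
    by_contra! hle
    have := hL.monotone hle
    have := Nat.find_spec hex
    omega
  refine ⟨Nat.find hex - 1, by omega, ?_, ?_⟩
  · exact not_le.mp (Nat.find_min hex (by omega))
  · rw [Nat.sub_add_cancel (by omega)]
    exact Nat.find_spec hex

theorem neg_mul_lt_sum_range_add {a : ℕ → ℤ} {m k : ℕ} {B ε δ : ℝ} (hδ : δ ≤ ε)
    (hhead : B - m * ε < ((∑ j ∈ range m, a j : ℤ) : ℝ))
    (hblock : -B - k * δ < ((∑ j ∈ Ico m (m + k), a j : ℤ) : ℝ)) :
    -((m + k : ℕ) * ε) < ((∑ j ∈ range (m + k), a j : ℤ) : ℝ) := by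
  rw [← sum_range_add_sum_Ico a (Nat.le_add_right m k)]
  push_cast at hhead hblock ⊢
  linarith [mul_le_mul_of_nonneg_left hδ k.cast_nonneg]

theorem liminf_nonneg_of_blocks_general (a : ℕ → ℤ) (L : ℕ → ℕ) (B : ℕ → ℕ)
    (hLmono : StrictMono L)
    (h1 : ∀ i : ℕ, 1 ≤ i →
      (B (i + 1) : ℝ) - (L i : ℝ) * (1 / 2 ^ i) <
        ((∑ j ∈ Finset.range (L i), a j : ℤ) : ℝ))
    (h2 : ∀ i : ℕ, 1 ≤ i → ∀ k : ℕ, L (i - 1) + k ≤ L i →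
      -(B i : ℝ) - (k : ℝ) * (1 / 2 ^ i) <
        ((∑ j ∈ Finset.Ico (L (i - 1)) (L (i - 1) + k), a j : ℤ) : ℝ)) :
    0 ≤ Filter.atTop.liminf
        (fun k : ℕ => ((∑ j ∈ Finset.range k, a j : ℤ) : ℝ) / k) := by
  refine liminf_nonneg_of_forall_eventually_neg_le fun ε hε => ?_
  obtain ⟨I, hI⟩ : ∃ I, (1 / 2 : ℝ) ^ I < ε := exists_pow_lt_of_lt_one hε (by norm_num)
  filter_upwards [eventually_gt_atTop (L (I + 1))] with n hn
  obtain ⟨i, hIi, hLi, hnLi⟩ := hLmono.exists_lt_le_succ hn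
  obtain ⟨k, rfl⟩ := Nat.exists_eq_add_of_le hLi.le
  have hprefix := neg_mul_lt_sum_range_add (ε := 1 / 2 ^ i) (δ := 1 / 2 ^ (i + 1))
    (one_div_pow_le_one_div_pow_of_le one_le_two i.le_succ) (h1 i (by omega))
    (by simpa only [Nat.add_sub_cancel] using h2 (i + 1) (by omega) k (by simpa using hnLi))
  have hεi : (1 : ℝ) / 2 ^ i < ε :=
    (one_div_pow_le_one_div_pow_of_le one_le_two (m := I) (by omega)).trans_lt
      (by rwa [← one_div_pow])
  rw [le_div_iff₀ (Nat.cast_pos.mpr (by omega))]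
  linarith [mul_le_mul_of_nonneg_left hεi.le (L i + k).cast_nonneg]

/-- Combining infinitely many blocks: if the cumulative block boundaries `L`
(with `L 0 = 0`, strictly increasing) satisfy, for `i ≥ 1`, that the total
weight up to the end of block `i` exceeds `B (i+1) - L i · εᵢ` (where
`εᵢ = 1/2^i`), and every prefix of block `i` of length `k` has weight
`> -B i - k·εᵢ`, then the mean-payoff-inf of the whole sequence is `≥ 0`. -/
theorem liminf_nonneg_of_blocks (a : ℕ → ℤ) (L : ℕ → ℕ) (B : ℕ → ℕ)
    (hL0 : L 0 = 0) (hLmono : StrictMono L)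
    (h1 : ∀ i : ℕ, 1 ≤ i →
      (B (i + 1) : ℝ) - (L i : ℝ) * (1 / 2 ^ i) <
        ((∑ j ∈ Finset.range (L i), a j : ℤ) : ℝ))
    (h2 : ∀ i : ℕ, 1 ≤ i → ∀ k : ℕ, L (i - 1) + k ≤ L i →
      -(B i : ℝ) - (k : ℝ) * (1 / 2 ^ i) <
        ((∑ j ∈ Finset.Ico (L (i - 1)) (L (i - 1) + k), a j : ℤ) : ℝ)) :
    0 ≤ Filter.atTop.liminf
        (fun k : ℕ => ((∑ j ∈ Finset.range k, a j : ℤ) : ℝ) / k) :=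
  liminf_nonneg_of_blocks_general a L B hLmono h1 h2
end
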